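/- Let 2/3 < p ≤ 1 and define g as above. Then for all q1, q2 ∈ [0,1] with (q1+q2)/2 ≥ p and all real a, ((1-a)^2/2) g(q1) + ((1+a)^2/2) g(q2) - g((q1+q2)/2) ≥ a^2. Moreover, the inequality with a = 0 holds for all q1, q2 ∈ [0,1]. -/

import Mathlib

/-!
With `k = p(2-p)/(3p-2) ≥ 0` and `x = 3p - 2q`, one has `gt' p q = 1 + k/x`. In
`(1-a)²/2 · gt' p q₁ + (1+a)²/2 · gt' p q₂ - gt' p ((q₁+q₂)/2)` the constants contribute exactly
`a²`, since `(1-a)²/2 + (1+a)²/2 - 1 = a²`, and the `k/x` terms contribute a nonnegative amount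
by Titu's lemma `4/(x+y) ≤ (1-a)²/x + (1+a)²/y`.

The linear piece of `g` is `q ↦ 2q/(3p-2)`, and `2q/(3p-2) - gt' p q` has the sign of
`(p-q)(q-(2p-1))`. Hence `g ≥ gt' p` on `[2p-1, 1]`, with equality from `p` on, which transfers
the inequality to `g` when the midpoint is `≥ p`; and `g` lies above its linear piece on `[0, 1]`,
which gives midpoint convexity when the midpoint is `< p`.
-/

/-- `gt' p q = 1 + p(2-p)/((3p-2)(3p-2q))` -/
noncomputable def gt' (p q : ℝ) : ℝ := 1 + p * (2 - p) / ((3 * p - 2) * (3 * p - 2 * q))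

/-- `g p q` equals `gt' p q` for `q ≥ p` and is linear, `g(p)·q/p`, for `q ≤ p`. -/
noncomputable def g (p q : ℝ) : ℝ := if q ≤ p then gt' p p * q / p else gt' p q

theorem add_sq_div_add_le {u v x y : ℝ} (hx : 0 < x) (hy : 0 < y) :
    (u + v) ^ 2 / (x + y) ≤ u ^ 2 / x + v ^ 2 / y := by
  simpa [Fin.sum_univ_two] using
    Finset.sq_sum_div_le_sum_sq_div Finset.univ ![u, v] (g := ![x, y])
      (by simp [Fin.forall_fin_two, hx, hy])

theorem sq_le_midpoint_gap_one_add_div {k x y : ℝ} (hk : 0 ≤ k) (hx : 0 < x) (hy : 0 < y)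
    (a : ℝ) :
    a ^ 2 ≤ (1 - a) ^ 2 / 2 * (1 + k / x) + (1 + a) ^ 2 / 2 * (1 + k / y)
      - (1 + k / ((x + y) / 2)) := by
  have titu := add_sq_div_add_le (u := 1 - a) (v := 1 + a) hx hy
  have gap : (1 - a) ^ 2 / 2 * (1 + k / x) + (1 + a) ^ 2 / 2 * (1 + k / y)
      - (1 + k / ((x + y) / 2)) - a ^ 2
      = k / 2 * ((1 - a) ^ 2 / x + (1 + a) ^ 2 / y - (1 - a + (1 + a)) ^ 2 / (x + y)) := by
    rw [div_div_eq_mul_div]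
    ring
  linarith [mul_nonneg (div_nonneg hk zero_le_two) (sub_nonneg.2 titu)]

theorem gt'_eq_one_add_div (p q : ℝ) :
    gt' p q = 1 + p * (2 - p) / (3 * p - 2) / (3 * p - 2 * q) := by
  rw [gt', div_div]

theorem sq_le_midpoint_gap_gt' {p q₁ q₂ : ℝ} (hp : 2 / 3 < p) (hp2 : p ≤ 2)
    (hq₁ : 2 * q₁ < 3 * p) (hq₂ : 2 * q₂ < 3 * p) (a : ℝ) :
    a ^ 2 ≤ (1 - a) ^ 2 / 2 * gt' p q₁ + (1 + a) ^ 2 / 2 * gt' p q₂ - gt' p ((q₁ + q₂) / 2) := by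
  have hk : 0 ≤ p * (2 - p) / (3 * p - 2) := div_nonneg (by nlinarith) (by linarith)
  have hm : 3 * p - 2 * ((q₁ + q₂) / 2) = ((3 * p - 2 * q₁) + (3 * p - 2 * q₂)) / 2 := by ring
  simp only [gt'_eq_one_add_div, hm]
  exact sq_le_midpoint_gap_one_add_div hk (by linarith) (by linarith) a

theorem two_mul_div_sub_gt' {p q : ℝ} (hp : 3 * p - 2 ≠ 0) (hq : 3 * p - 2 * q ≠ 0) :
    2 * q / (3 * p - 2) - gt' p q
      = 4 * (p - q) * (q - (2 * p - 1)) / ((3 * p - 2) * (3 * p - 2 * q)) := by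
  rw [gt', eq_div_iff (mul_ne_zero hp hq), sub_mul, add_mul,
    div_mul_cancel₀ _ (mul_ne_zero hp hq), div_mul_eq_mul_div, mul_div_assoc,
    mul_div_cancel_left₀ _ hp]
  ring

theorem gt'_self {p : ℝ} (hp : 2 / 3 < p) : gt' p p = 2 * p / (3 * p - 2) := by
  refine (sub_eq_zero.1 ?_).symm
  rw [two_mul_div_sub_gt' (by linarith) (by linarith)]
  simp

theorem g_of_le {p q : ℝ} (hp : 2 / 3 < p) (hq : q ≤ p) : g p q = 2 * q / (3 * p - 2) := by
  rw [g, if_pos hq, gt'_self hp]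
  field_simp [show p ≠ 0 by linarith]

theorem g_of_ge {p q : ℝ} (hp : 2 / 3 < p) (hq : p ≤ q) : g p q = gt' p q := by
  rcases hq.lt_or_eq with hq | rfl
  · exact if_neg (not_le.2 hq)
  · rw [g_of_le hp le_rfl, gt'_self hp]

theorem gt'_le_g {p q : ℝ} (hp : 2 / 3 < p) (hq₀ : 2 * p - 1 ≤ q) (hq : 2 * q < 3 * p) :
    gt' p q ≤ g p q := by
  rcases le_or_gt q p with hqp | hpq
  · rw [g_of_le hp hqp, ← sub_nonneg, two_mul_div_sub_gt' (by linarith) (by linarith)]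
    have hden : 0 < (3 * p - 2) * (3 * p - 2 * q) := mul_pos (by linarith) (by linarith)
    exact div_nonneg (by nlinarith) hden.le
  · rw [g_of_ge hp hpq.le]

theorem two_mul_div_le_g {p q : ℝ} (hp : 2 / 3 < p) (hp1 : p ≤ 1) (hq : 2 * q < 3 * p) :
    2 * q / (3 * p - 2) ≤ g p q := by
  rcases le_or_gt q p with hqp | hpq
  · rw [g_of_le hp hqp]
  · rw [g_of_ge hp hpq.le, ← sub_nonpos, two_mul_div_sub_gt' (by linarith) (by linarith)]
    have hden : 0 < (3 * p - 2) * (3 * p - 2 * q) := mul_pos (by linarith) (by linarith)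
    exact div_nonpos_of_nonpos_of_nonneg (by nlinarith) hden.le

theorem sq_le_midpoint_gap_g {p q₁ q₂ : ℝ} (hp : 2 / 3 < p) (hp1 : p ≤ 1) (hq₁ : q₁ ≤ 1)
    (hq₂ : q₂ ≤ 1) (hm : p ≤ (q₁ + q₂) / 2) (a : ℝ) :
    a ^ 2 ≤ (1 - a) ^ 2 / 2 * g p q₁ + (1 + a) ^ 2 / 2 * g p q₂ - g p ((q₁ + q₂) / 2) :=
  calc a ^ 2
      ≤ (1 - a) ^ 2 / 2 * gt' p q₁ + (1 + a) ^ 2 / 2 * gt' p q₂ - gt' p ((q₁ + q₂) / 2) :=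
        sq_le_midpoint_gap_gt' hp (by linarith) (by linarith) (by linarith) a
    _ ≤ (1 - a) ^ 2 / 2 * g p q₁ + (1 + a) ^ 2 / 2 * g p q₂ - g p ((q₁ + q₂) / 2) := by
        rw [g_of_ge hp hm]
        gcongr
        · exact gt'_le_g hp (by linarith) (by linarith)
        · exact gt'_le_g hp (by linarith) (by linarith)

theorem g_midpoint_le {p q₁ q₂ : ℝ} (hp : 2 / 3 < p) (hp1 : p ≤ 1) (hq₁ : q₁ ≤ 1)
    (hq₂ : q₂ ≤ 1) : g p ((q₁ + q₂) / 2) ≤ (g p q₁ + g p q₂) / 2 := by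
  rcases le_or_gt p ((q₁ + q₂) / 2) with hm | hm
  · linarith [sq_le_midpoint_gap_g hp hp1 hq₁ hq₂ hm 0]
  · have h₁ := two_mul_div_le_g hp hp1 (q := q₁) (by linarith)
    have h₂ := two_mul_div_le_g hp hp1 (q := q₂) (by linarith)
    have hlin : 2 * ((q₁ + q₂) / 2) / (3 * p - 2)
        = (2 * q₁ / (3 * p - 2) + 2 * q₂ / (3 * p - 2)) / 2 := by ring
    rw [g_of_le hp hm.le, hlin]
    linarith

theorem stmt_6 (p : ℝ) (hp1 : 2 / 3 < p) (hp2 : p ≤ 1) :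
    (∀ q1 ∈ Set.Icc (0:ℝ) 1, ∀ q2 ∈ Set.Icc (0:ℝ) 1, (q1 + q2) / 2 ≥ p → ∀ a : ℝ,
      (1 - a)^2 / 2 * g p q1 + (1 + a)^2 / 2 * g p q2 - g p ((q1 + q2) / 2) ≥ a^2) ∧
    (∀ q1 ∈ Set.Icc (0:ℝ) 1, ∀ q2 ∈ Set.Icc (0:ℝ) 1,
      (1 - (0:ℝ))^2 / 2 * g p q1 + (1 + (0:ℝ))^2 / 2 * g p q2 - g p ((q1 + q2) / 2)
        ≥ (0:ℝ)^2) := by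
  refine ⟨fun q1 hq1 q2 hq2 hm a => sq_le_midpoint_gap_g hp1 hp2 hq1.2 hq2.2 hm a,
    fun q1 hq1 q2 hq2 => ?_⟩
  linarith [g_midpoint_le hp1 hp2 hq1.2 hq2.2]
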